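/- arXiv:1801.03786 — 5 statements merged into one kernel-verified Lean document; each statement's English description precedes it below -/
import Mathlib

section
/- Let F : ℝ → ℝ and let φ₁, φ₂ : ℝ → ℝ be differentiable. Define u : {(x₁,x₂) ∈ ℝ² : x₁ + φ₁(x₂) > 0} → ℝ by u(x₁,x₂) = Real.log (x₁ + φ₁(x₂)) + φ₂(x₂). Then at every point (x₁,x₂) of this domain, the equation ∂²u/∂x₂∂x₁ = (∂u/∂x₁)² · F(u + Real.log (∂u/∂x₁)) holds if and only if φ₁'(x₂) = −F(φ₂(x₂)). -/
open Real

/-- No differentiability is needed: since `c = (c⁻¹)⁻¹`, the functions `c` and `c⁻¹` are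
differentiable at `x` together, and otherwise both sides vanish. -/
theorem deriv_fun_inv_of_ne_zero {𝕜 : Type*} [NontriviallyNormedField 𝕜] {c : 𝕜 → 𝕜} {x : 𝕜}
    (hx : c x ≠ 0) : deriv (fun y => (c y)⁻¹) x = -deriv c x / c x ^ 2 := by
  by_cases hc : DifferentiableAt 𝕜 c x
  · exact deriv_fun_inv'' hc hx
  have hc_inv : ¬DifferentiableAt 𝕜 (fun y => (c y)⁻¹) x := fun h => hc <| by
    simpa only [inv_inv] using h.fun_inv (inv_ne_zero hx)
  rw [deriv_zero_of_not_differentiableAt hc, deriv_zero_of_not_differentiableAt hc_inv]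
  simp

/-- Valid for every `x`, through the conventions `log y = log |y|` and `0⁻¹ = 0`. -/
theorem deriv_log_add_add_const (a b x : ℝ) :
    deriv (fun s => log (s + a) + b) x = (x + a)⁻¹ := by
  rw [deriv_add_const, deriv_comp_add_const, deriv_log]

theorem ansatz_reduces_iff_general
    (F : ℝ → ℝ) (φ₁ φ₂ : ℝ → ℝ)
    (u : ℝ → ℝ → ℝ)
    (hu : ∀ x₁ x₂ : ℝ, u x₁ x₂ = Real.log (x₁ + φ₁ x₂) + φ₂ x₂) :
    ∀ x₁ x₂ : ℝ, 0 < x₁ + φ₁ x₂ →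
      (deriv (fun t => deriv (fun s => u s t) x₁) x₂ =
          (deriv (fun s => u s x₂) x₁) ^ 2 *
            F (u x₁ x₂ + Real.log (deriv (fun s => u s x₂) x₁)) ↔
        deriv φ₁ x₂ = -F (φ₂ x₂)) := by
  intro x₁ x₂ hpos
  obtain rfl : u = fun s t => log (s + φ₁ t) + φ₂ t := funext₂ hu
  have hne : x₁ + φ₁ x₂ ≠ 0 := hpos.ne'
  have harg : log (x₁ + φ₁ x₂) + φ₂ x₂ + log (x₁ + φ₁ x₂)⁻¹ = φ₂ x₂ := by rw [log_inv]; ring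
  simp only [deriv_log_add_add_const]
  rw [deriv_fun_inv_of_ne_zero (c := fun t => x₁ + φ₁ t) hne, deriv_const_add, harg, inv_pow,
    ← div_eq_inv_mul, div_left_inj' (pow_ne_zero 2 hne), neg_eq_iff_eq_neg]

/-- For the ansatz `u(x₁,x₂) = log (x₁ + φ₁ x₂) + φ₂ x₂` on the domain
`x₁ + φ₁ x₂ > 0`, the equation `u_{x₁x₂} = (u_{x₁})² F(u + log u_{x₁})` holds at a point
iff `φ₁' x₂ = -F (φ₂ x₂)` there. -/
theorem ansatz_reduces_iff
    (F : ℝ → ℝ) (φ₁ φ₂ : ℝ → ℝ)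
    (hφ₁ : Differentiable ℝ φ₁) (hφ₂ : Differentiable ℝ φ₂)
    (u : ℝ → ℝ → ℝ)
    (hu : ∀ x₁ x₂ : ℝ, u x₁ x₂ = Real.log (x₁ + φ₁ x₂) + φ₂ x₂) :
    ∀ x₁ x₂ : ℝ, 0 < x₁ + φ₁ x₂ →
      (deriv (fun t => deriv (fun s => u s t) x₁) x₂ =
          (deriv (fun s => u s x₂) x₁) ^ 2 *
            F (u x₁ x₂ + Real.log (deriv (fun s => u s x₂) x₁)) ↔
        deriv φ₁ x₂ = -F (φ₂ x₂)) :=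
  ansatz_reduces_iff_general F φ₁ φ₂ u hu
end

section
/- Let F : ℝ → ℝ be continuous, let φ₂ : ℝ → ℝ be differentiable, and let G : ℝ → ℝ be differentiable with G'(x₂) = F(φ₂(x₂)) for all x₂ ∈ ℝ. Define u(x₁,x₂) = Real.log (x₁ − G(x₂)) + φ₂(x₂) on the domain {(x₁,x₂) : x₁ > G(x₂)}. Then u satisfies ∂²u/∂x₂∂x₁ = (∂u/∂x₁)² · F(u + Real.log (∂u/∂x₁)) at every point of this domain. -/
/-- With `G' = F ∘ φ₂`, the function `u(x₁,x₂) = log (x₁ - G x₂) + φ₂ x₂`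
satisfies `u_{x₁x₂} = (u_{x₁})² F(u + log u_{x₁})` on the domain `x₁ > G x₂`. -/
theorem explicit_solution_of_hyperbolic_eq
    (F : ℝ → ℝ) (hF : Continuous F)
    (φ₂ : ℝ → ℝ) (hφ₂ : Differentiable ℝ φ₂)
    (G : ℝ → ℝ) (hG : ∀ x₂ : ℝ, HasDerivAt G (F (φ₂ x₂)) x₂)
    (u : ℝ → ℝ → ℝ)
    (hu : ∀ x₁ x₂ : ℝ, u x₁ x₂ = Real.log (x₁ - G x₂) + φ₂ x₂) :
    ∀ x₁ x₂ : ℝ, G x₂ < x₁ →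
      deriv (fun t => deriv (fun s => u s t) x₁) x₂ =
        (deriv (fun s => u s x₂) x₁) ^ 2 *
          F (u x₁ x₂ + Real.log (deriv (fun s => u s x₂) x₁)) := by
  intro x₁ x₂ hx
  -- inner derivative formula, valid whenever G t < x₁
  have hinner : ∀ t : ℝ, G t < x₁ → deriv (fun s => u s t) x₁ = (x₁ - G t)⁻¹ := by
    intro t ht
    have hne : x₁ - G t ≠ 0 := by linarith
    have h1 : HasDerivAt (fun s : ℝ => Real.log (s - G t) + φ₂ t) ((x₁ - G t)⁻¹) x₁ := by
      have := (((hasDerivAt_id x₁).sub_const (G t)).log hne).add_const (φ₂ t)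
      simpa using this
    have h2 : HasDerivAt (fun s : ℝ => u s t) ((x₁ - G t)⁻¹) x₁ := by
      have : (fun s : ℝ => u s t) = fun s : ℝ => Real.log (s - G t) + φ₂ t := by
        funext s; exact hu s t
      rw [this]; exact h1
    exact h2.deriv
  -- the inner-derivative function agrees with t ↦ (x₁ - G t)⁻¹ near x₂
  have hev : (fun t => deriv (fun s => u s t) x₁) =ᶠ[nhds x₂] fun t => (x₁ - G t)⁻¹ := by
    have hcont : ContinuousAt G x₂ := (hG x₂).continuousAt
    have : ∀ᶠ t in nhds x₂, G t < x₁ := hcont.eventually_lt continuousAt_const hx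
    filter_upwards [this] with t ht using hinner t ht
  rw [hev.deriv_eq]
  have hne : x₁ - G x₂ ≠ 0 := by linarith
  have hd : HasDerivAt (fun t => (x₁ - G t)⁻¹)
      (-(-F (φ₂ x₂)) / (x₁ - G x₂) ^ 2) x₂ := by
    have h : HasDerivAt (fun t => x₁ - G t) (-F (φ₂ x₂)) x₂ := by
      simpa using (hG x₂).const_sub x₁
    exact h.inv hne
  rw [hd.deriv, hinner x₂ hx, hu x₁ x₂, Real.log_inv,
    add_assoc, add_comm (φ₂ x₂), add_neg_cancel_left]
  field_simp
end

section
/- Let k ≠ 0 be a real constant. Let w : ℝ² → ℝ be differentiable in x₁ with ∂w/∂x₁ differentiable in x₂, satisfying the sine-Gordon equation ∂²w/∂x₂∂x₁ = sin w on ℝ². Let u : ℝ² → ℝ be differentiable satisfying the Bäcklund relations ∂u/∂x₂ = k⁻¹ sin(u − w) and ∂u/∂x₁ = ∂w/∂x₁ + k sin u on ℝ², and suppose cos(u − w) ≥ 0 everywhere. Then u satisfies ∂²u/∂x₂∂x₁ = √(1 − k² (∂u/∂x₂)²) · sin u on ℝ² (in particular 1 − k²(∂u/∂x₂)² ≥ 0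 everywhere, so the square root is real). -/
/-! Along the flow `u_{x₂} = k⁻¹ sin (u - w)` one has `1 - k² u_{x₂}² = cos² (u - w)`, so under
`cos (u - w) ≥ 0` the square root in the equation is `cos (u - w)`. Differentiating the other
relation in `x₂` gives `u_{x₁x₂} = sin w + cos u · sin (u - w)`, and this equals
`cos (u - w) · sin u` by the addition formulas. -/

open Real

lemma one_sub_sq_mul_inv_mul_sin_sq {k : ℝ} (hk : k ≠ 0) (θ : ℝ) :
    1 - k ^ 2 * (k⁻¹ * sin θ) ^ 2 = cos θ ^ 2 := by
  rw [mul_pow, ← mul_assoc, ← mul_pow, mul_inv_cancel₀ hk, one_pow, one_mul,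
    ← sin_sq_add_cos_sq θ, add_sub_cancel_left]

lemma sin_add_cos_mul_sin_sub (a b : ℝ) : sin b + cos a * sin (a - b) = cos (a - b) * sin a := by
  rw [sin_sub, cos_sub]
  linear_combination -sin b * sin_sq_add_cos_sq a

lemma DifferentiableAt.comp_prodMk_left {𝕜 E F G : Type*} [NontriviallyNormedField 𝕜]
    [NormedAddCommGroup E] [NormedSpace 𝕜 E] [NormedAddCommGroup F] [NormedSpace 𝕜 F]
    [NormedAddCommGroup G] [NormedSpace 𝕜 G] {f : E × F → G} {a : E} {b : F}
    (hf : DifferentiableAt 𝕜 f (a, b)) : DifferentiableAt 𝕜 (fun t => f (a, t)) b :=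
  hf.comp b ((differentiableAt_const a).prodMk differentiableAt_id)

theorem backlund_transformation_general
    (k : ℝ) (hk : k ≠ 0) (w u : ℝ × ℝ → ℝ)
    (hw12 : ∀ x₁ x₂ : ℝ,
      DifferentiableAt ℝ (fun t => deriv (fun s => w (s, t)) x₁) x₂)
    (hsg : ∀ x₁ x₂ : ℝ,
      deriv (fun t => deriv (fun s => w (s, t)) x₁) x₂ = Real.sin (w (x₁, x₂)))
    (hu : Differentiable ℝ u)
    (hb2 : ∀ x₁ x₂ : ℝ,
      deriv (fun t => u (x₁, t)) x₂ = k⁻¹ * Real.sin (u (x₁, x₂) - w (x₁, x₂)))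
    (hb1 : ∀ x₁ x₂ : ℝ,
      deriv (fun s => u (s, x₂)) x₁ =
        deriv (fun s => w (s, x₂)) x₁ + k * Real.sin (u (x₁, x₂)))
    (hcos : ∀ x₁ x₂ : ℝ, 0 ≤ Real.cos (u (x₁, x₂) - w (x₁, x₂))) :
    ∀ x₁ x₂ : ℝ,
      0 ≤ 1 - k ^ 2 * (deriv (fun t => u (x₁, t)) x₂) ^ 2 ∧
      deriv (fun t => deriv (fun s => u (s, t)) x₁) x₂ =
        Real.sqrt (1 - k ^ 2 * (deriv (fun t => u (x₁, t)) x₂) ^ 2) *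
          Real.sin (u (x₁, x₂)) := by
  intro x₁ x₂
  have hroot : 1 - k ^ 2 * (deriv (fun t => u (x₁, t)) x₂) ^ 2
      = cos (u (x₁, x₂) - w (x₁, x₂)) ^ 2 := by
    rw [hb2, one_sub_sq_mul_inv_mul_sin_sq hk]
  have hut := (hu (x₁, x₂)).comp_prodMk_left.hasDerivAt
  rw [hb2] at hut
  have hwt := (hw12 x₁ x₂).hasDerivAt
  rw [hsg] at hwt
  have hmixed : deriv (fun t => deriv (fun s => u (s, t)) x₁) x₂
      = sin (w (x₁, x₂)) + cos (u (x₁, x₂)) * sin (u (x₁, x₂) - w (x₁, x₂)) := by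
    rw [funext fun t => hb1 x₁ t]
    refine (hwt.add (hut.sin.const_mul k)).deriv.trans ?_
    rw [mul_left_comm, mul_inv_cancel_left₀ hk]
  refine ⟨hroot ▸ sq_nonneg _, ?_⟩
  rw [hmixed, hroot, sqrt_sq (hcos x₁ x₂), sin_add_cos_mul_sin_sub]

/-- The Bäcklund relations `u_{x₂} = k⁻¹ sin(u - w)`,
`u_{x₁} = w_{x₁} + k sin u` map a solution `w` of the sine-Gordon equation
`w_{x₁x₂} = sin w` to a solution `u` of `u_{x₁x₂} = √(1 - k² u_{x₂}²) · sin u`,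
provided `cos (u - w) ≥ 0` everywhere. -/
theorem backlund_transformation
    (k : ℝ) (hk : k ≠ 0) (w u : ℝ × ℝ → ℝ)
    (hw1 : ∀ x₁ x₂ : ℝ, DifferentiableAt ℝ (fun s => w (s, x₂)) x₁)
    (hw12 : ∀ x₁ x₂ : ℝ,
      DifferentiableAt ℝ (fun t => deriv (fun s => w (s, t)) x₁) x₂)
    (hsg : ∀ x₁ x₂ : ℝ,
      deriv (fun t => deriv (fun s => w (s, t)) x₁) x₂ = Real.sin (w (x₁, x₂)))
    (hu : Differentiable ℝ u)
    (hb2 : ∀ x₁ x₂ : ℝ,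
      deriv (fun t => u (x₁, t)) x₂ = k⁻¹ * Real.sin (u (x₁, x₂) - w (x₁, x₂)))
    (hb1 : ∀ x₁ x₂ : ℝ,
      deriv (fun s => u (s, x₂)) x₁ =
        deriv (fun s => w (s, x₂)) x₁ + k * Real.sin (u (x₁, x₂)))
    (hcos : ∀ x₁ x₂ : ℝ, 0 ≤ Real.cos (u (x₁, x₂) - w (x₁, x₂))) :
    ∀ x₁ x₂ : ℝ,
      0 ≤ 1 - k ^ 2 * (deriv (fun t => u (x₁, t)) x₂) ^ 2 ∧
      deriv (fun t => deriv (fun s => u (s, t)) x₁) x₂ =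
        Real.sqrt (1 - k ^ 2 * (deriv (fun t => u (x₁, t)) x₂) ^ 2) *
          Real.sin (u (x₁, x₂)) :=
  backlund_transformation_general k hk w u hw12 hsg hu hb2 hb1 hcos
end

section
/- Let k ≠ 0 be a real constant. Let u : ℝ² → ℝ be twice continuously differentiable and let φ₁, φ₂ : ℝ² → ℝ be differentiable, satisfying on ℝ² the ansatz relations ∂u/∂x₁ = φ₂ + k sin u and ∂u/∂x₂ = k⁻¹ sin(u − φ₁), with cos(u − φ₁) > 0 everywhere. If u satisfies ∂²u/∂x₂∂x₁ = √(1 − k² (∂u/∂x₂)²) · sin u on ℝ², then ∂φ₁/∂x₁ = φ₂ and ∂φ₂/∂x₂ = sin φ₁ on ℝ²; consequently, if additionally φ₁ is twice continuously differentiable, then φ₁ satisfies the sine-Gordon equation ∂²φ₁/∂x₂∂x₁ = sin φ₁. -/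
/-!
With `θ = u - φ₁`, the ansatz gives `k u_{x₂} = sin θ`, so the square root in (7) is
`cos θ > 0` and (7) reads `u_{x₁x₂} = cos θ · sin u`. Differentiating `u_{x₂} = k⁻¹ sin θ` in `x₁`
gives `u_{x₂x₁} = k⁻¹ cos θ · (φ₂ + k sin u - φ₁_{x₁})`, and by symmetry of the mixed partials of `u`
this forces `φ₁_{x₁} = φ₂`. Differentiating `u_{x₁} = φ₂ + k sin u` in `x₂` gives
`φ₂_{x₂} = sin u · cos θ - cos u · sin θ = sin (u - θ) = sin φ₁`.
-/

open Real

section PartialDerivatives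

variable {F : Type*} [NormedAddCommGroup F] [NormedSpace ℝ F] {f : ℝ × ℝ → F} {x₁ x₂ : ℝ}

theorem HasFDerivAt.hasDerivAt_partial_fst {f' : ℝ × ℝ →L[ℝ] F} (hf : HasFDerivAt f f' (x₁, x₂)) :
    HasDerivAt (fun s => f (s, x₂)) (f' (1, 0)) x₁ :=
  hf.comp_hasDerivAt x₁ ((hasDerivAt_id x₁).prodMk (hasDerivAt_const x₁ x₂))

theorem HasFDerivAt.hasDerivAt_partial_snd {f' : ℝ × ℝ →L[ℝ] F} (hf : HasFDerivAt f f' (x₁, x₂)) :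
    HasDerivAt (fun t => f (x₁, t)) (f' (0, 1)) x₂ :=
  hf.comp_hasDerivAt x₂ ((hasDerivAt_const x₂ x₁).prodMk (hasDerivAt_id x₂))

theorem ContDiff.hasDerivAt_deriv_partial_fst (hf : ContDiff ℝ 2 f) (x₁ x₂ : ℝ) :
    HasDerivAt (fun t => deriv (fun s => f (s, t)) x₁)
      (fderiv ℝ (fderiv ℝ f) (x₁, x₂) (0, 1) (1, 0)) x₂ := by
  have hdf : ∀ t, deriv (fun s => f (s, t)) x₁ = fderiv ℝ f (x₁, t) (1, 0) := fun t =>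
    ((hf.differentiable two_ne_zero _).hasFDerivAt.hasDerivAt_partial_fst).deriv
  have hf' := ((hf.fderiv_right (m := 1) le_rfl).differentiable one_ne_zero (x₁, x₂)).hasFDerivAt
  simpa [hdf] using hf'.hasDerivAt_partial_snd.clm_apply (hasDerivAt_const x₂ ((1 : ℝ), (0 : ℝ)))

theorem ContDiff.hasDerivAt_deriv_partial_snd (hf : ContDiff ℝ 2 f) (x₁ x₂ : ℝ) :
    HasDerivAt (fun s => deriv (fun t => f (s, t)) x₂)
      (fderiv ℝ (fderiv ℝ f) (x₁, x₂) (1, 0) (0, 1)) x₁ := by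
  have hdf : ∀ s, deriv (fun t => f (s, t)) x₂ = fderiv ℝ f (s, x₂) (0, 1) := fun s =>
    ((hf.differentiable two_ne_zero _).hasFDerivAt.hasDerivAt_partial_snd).deriv
  have hf' := ((hf.fderiv_right (m := 1) le_rfl).differentiable one_ne_zero (x₁, x₂)).hasFDerivAt
  simpa [hdf] using hf'.hasDerivAt_partial_fst.clm_apply (hasDerivAt_const x₁ ((0 : ℝ), (1 : ℝ)))

theorem ContDiff.hasDerivAt_mixed_partials (hf : ContDiff ℝ 2 f) (x₁ x₂ : ℝ) :
    HasDerivAt (fun t => deriv (fun s => f (s, t)) x₁)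
        (deriv (fun t => deriv (fun s => f (s, t)) x₁) x₂) x₂ ∧
      HasDerivAt (fun s => deriv (fun t => f (s, t)) x₂)
        (deriv (fun t => deriv (fun s => f (s, t)) x₁) x₂) x₁ := by
  have h₁₂ := hf.hasDerivAt_deriv_partial_fst x₁ x₂
  have hsymm := hf.contDiffAt.isSymmSndFDerivAt (x := (x₁, x₂)) (by simp)
  rw [h₁₂.deriv]
  exact ⟨h₁₂, hsymm (0, 1) (1, 0) ▸ hf.hasDerivAt_deriv_partial_snd x₁ x₂⟩

end PartialDerivatives

theorem sqrt_one_sub_sq_mul_inv_mul_sin {k θ : ℝ} (hk : k ≠ 0) (hθ : 0 ≤ cos θ) :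
    √(1 - k ^ 2 * (k⁻¹ * sin θ) ^ 2) = cos θ := by
  rw [mul_pow, ← mul_assoc, ← mul_pow, mul_inv_cancel₀ hk, one_pow, one_mul, ← cos_sq',
    sqrt_sq hθ]

section Ansatz

variable {k : ℝ} {u φ₁ φ₂ : ℝ × ℝ → ℝ} {x₁ x₂ : ℝ}

theorem deriv_fst_eq_of_ansatz (hk : k ≠ 0) (hu : DifferentiableAt ℝ u (x₁, x₂))
    (hφ₁ : DifferentiableAt ℝ φ₁ (x₁, x₂))
    (ha1 : deriv (fun s => u (s, x₂)) x₁ = φ₂ (x₁, x₂) + k * sin (u (x₁, x₂)))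
    (ha2 : ∀ s, deriv (fun t => u (s, t)) x₂ = k⁻¹ * sin (u (s, x₂) - φ₁ (s, x₂)))
    (hcos : cos (u (x₁, x₂) - φ₁ (x₁, x₂)) ≠ 0)
    (hmix : HasDerivAt (fun s => deriv (fun t => u (s, t)) x₂)
      (cos (u (x₁, x₂) - φ₁ (x₁, x₂)) * sin (u (x₁, x₂))) x₁) :
    deriv (fun s => φ₁ (s, x₂)) x₁ = φ₂ (x₁, x₂) := by
  have hu₁ := hu.hasFDerivAt.hasDerivAt_partial_fst
  have hφ₁₁ := hφ₁.hasFDerivAt.hasDerivAt_partial_fst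
  rw [funext ha2] at hmix
  have key := hmix.unique ((hu₁.fun_sub hφ₁₁).sin.const_mul k⁻¹)
  rw [← hu₁.deriv, ha1] at key
  rw [hφ₁₁.deriv]
  field_simp at key
  linarith

theorem deriv_snd_eq_of_ansatz (hk : k ≠ 0) (hu : DifferentiableAt ℝ u (x₁, x₂))
    (ha1 : ∀ t, deriv (fun s => u (s, t)) x₁ = φ₂ (x₁, t) + k * sin (u (x₁, t)))
    (ha2 : deriv (fun t => u (x₁, t)) x₂ = k⁻¹ * sin (u (x₁, x₂) - φ₁ (x₁, x₂)))
    (hmix : HasDerivAt (fun t => deriv (fun s => u (s, t)) x₁)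
      (cos (u (x₁, x₂) - φ₁ (x₁, x₂)) * sin (u (x₁, x₂))) x₂) :
    deriv (fun t => φ₂ (x₁, t)) x₂ = sin (φ₁ (x₁, x₂)) := by
  have hφ₂ : (fun t => φ₂ (x₁, t)) =
      fun t => deriv (fun s => u (s, t)) x₁ - k * sin (u (x₁, t)) :=
    funext fun t => by rw [ha1]; ring
  have hu₂ := hu.hasFDerivAt.hasDerivAt_partial_snd
  rw [hu₂.deriv] at ha2
  have hsin : sin (φ₁ (x₁, x₂)) = sin (u (x₁, x₂)) * cos (u (x₁, x₂) - φ₁ (x₁, x₂)) -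
      cos (u (x₁, x₂)) * sin (u (x₁, x₂) - φ₁ (x₁, x₂)) := by
    rw [← sin_sub, sub_sub_cancel]
  rw [hφ₂, (hmix.fun_sub (hu₂.sin.const_mul k)).deriv, ha2, hsin]
  field_simp

end Ansatz

theorem reduction_to_sine_gordon_general
    (k : ℝ) (hk : k ≠ 0) (u φ₁ φ₂ : ℝ × ℝ → ℝ)
    (hu : ContDiff ℝ 2 u)
    (hφ₁ : Differentiable ℝ φ₁)
    (ha1 : ∀ x₁ x₂ : ℝ,
      deriv (fun s => u (s, x₂)) x₁ = φ₂ (x₁, x₂) + k * Real.sin (u (x₁, x₂)))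
    (ha2 : ∀ x₁ x₂ : ℝ,
      deriv (fun t => u (x₁, t)) x₂ = k⁻¹ * Real.sin (u (x₁, x₂) - φ₁ (x₁, x₂)))
    (hcos : ∀ x₁ x₂ : ℝ, 0 < Real.cos (u (x₁, x₂) - φ₁ (x₁, x₂)))
    (heq : ∀ x₁ x₂ : ℝ,
      deriv (fun t => deriv (fun s => u (s, t)) x₁) x₂ =
        Real.sqrt (1 - k ^ 2 * (deriv (fun t => u (x₁, t)) x₂) ^ 2) *
          Real.sin (u (x₁, x₂))) :
    (∀ x₁ x₂ : ℝ, deriv (fun s => φ₁ (s, x₂)) x₁ = φ₂ (x₁, x₂)) ∧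
    (∀ x₁ x₂ : ℝ, deriv (fun t => φ₂ (x₁, t)) x₂ = Real.sin (φ₁ (x₁, x₂))) ∧
    (ContDiff ℝ 2 φ₁ → ∀ x₁ x₂ : ℝ,
      deriv (fun t => deriv (fun s => φ₁ (s, t)) x₁) x₂ = Real.sin (φ₁ (x₁, x₂))) := by
  have hud : Differentiable ℝ u := hu.differentiable two_ne_zero
  have hmix : ∀ x₁ x₂, deriv (fun t => deriv (fun s => u (s, t)) x₁) x₂ =
      cos (u (x₁, x₂) - φ₁ (x₁, x₂)) * sin (u (x₁, x₂)) := fun x₁ x₂ => by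
    rw [heq, ha2, sqrt_one_sub_sq_mul_inv_mul_sin hk (hcos x₁ x₂).le]
  have hφ₁₁ : ∀ x₁ x₂, deriv (fun s => φ₁ (s, x₂)) x₁ = φ₂ (x₁, x₂) := fun x₁ x₂ =>
    deriv_fst_eq_of_ansatz hk (hud _) (hφ₁ _) (ha1 x₁ x₂) (ha2 · x₂) (hcos x₁ x₂).ne'
      (hmix x₁ x₂ ▸ (hu.hasDerivAt_mixed_partials x₁ x₂).2)
  have hφ₂₂ : ∀ x₁ x₂, deriv (fun t => φ₂ (x₁, t)) x₂ = sin (φ₁ (x₁, x₂)) := fun x₁ x₂ =>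
    deriv_snd_eq_of_ansatz hk (hud _) (ha1 x₁ ·) (ha2 x₁ x₂)
      (hmix x₁ x₂ ▸ (hu.hasDerivAt_mixed_partials x₁ x₂).1)
  refine ⟨hφ₁₁, hφ₂₂, fun _ x₁ x₂ => ?_⟩
  simp only [hφ₁₁]
  exact hφ₂₂ x₁ x₂

/-- If `u` satisfies the ansatz relations `u_{x₁} = φ₂ + k sin u`,
`u_{x₂} = k⁻¹ sin(u - φ₁)` with `cos (u - φ₁) > 0`, and `u` solves
`u_{x₁x₂} = √(1 - k² u_{x₂}²) sin u`, then `φ₁_{x₁} = φ₂` and `φ₂_{x₂} = sin φ₁`;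
consequently (if `φ₁` is C²) `φ₁` satisfies the sine-Gordon equation. -/
theorem reduction_to_sine_gordon
    (k : ℝ) (hk : k ≠ 0) (u φ₁ φ₂ : ℝ × ℝ → ℝ)
    (hu : ContDiff ℝ 2 u)
    (hφ₁ : Differentiable ℝ φ₁) (hφ₂ : Differentiable ℝ φ₂)
    (ha1 : ∀ x₁ x₂ : ℝ,
      deriv (fun s => u (s, x₂)) x₁ = φ₂ (x₁, x₂) + k * Real.sin (u (x₁, x₂)))
    (ha2 : ∀ x₁ x₂ : ℝ,
      deriv (fun t => u (x₁, t)) x₂ = k⁻¹ * Real.sin (u (x₁, x₂) - φ₁ (x₁, x₂)))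
    (hcos : ∀ x₁ x₂ : ℝ, 0 < Real.cos (u (x₁, x₂) - φ₁ (x₁, x₂)))
    (heq : ∀ x₁ x₂ : ℝ,
      deriv (fun t => deriv (fun s => u (s, t)) x₁) x₂ =
        Real.sqrt (1 - k ^ 2 * (deriv (fun t => u (x₁, t)) x₂) ^ 2) *
          Real.sin (u (x₁, x₂))) :
    (∀ x₁ x₂ : ℝ, deriv (fun s => φ₁ (s, x₂)) x₁ = φ₂ (x₁, x₂)) ∧
    (∀ x₁ x₂ : ℝ, deriv (fun t => φ₂ (x₁, t)) x₂ = Real.sin (φ₁ (x₁, x₂))) ∧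
    (ContDiff ℝ 2 φ₁ → ∀ x₁ x₂ : ℝ,
      deriv (fun t => deriv (fun s => φ₁ (s, t)) x₁) x₂ = Real.sin (φ₁ (x₁, x₂))) :=
  reduction_to_sine_gordon_general k hk u φ₁ φ₂ hu hφ₁ ha1 ha2 hcos heq
end

section
/- Let α > 0, C₁ > 0, and C ∈ ℝ be real constants, let D ⊆ {(x,t) ∈ ℝ² : t > 0} be open, and let θ : D → ℝ be a function such that θ and the function w defined below have all partial derivatives appearing in the conclusion, with mixed partial derivatives commuting. Suppose θ satisfies the implicit relation θ(x,t) = α t (C₁ E(x,t) − 1)/(C₁ E(x,t) + 1) on D, where E(x,t) = exp(α(x + C θ(x,t))). Define A(x,t) = (C₁ E(x,t) + 1)² / (2α² t C₁ E(x,t)) and assume A(x,t) − C ≠ 0 on D, and set w(x,t) = 1/(A(x,t) − C) (equivalently, (C w + 1)/w = A). Assume further that w(x,t) ≠ 0 and C w(x,t) + 1 ≠ 0 on D. Then w satisfies ∂w/∂t + ∂/∂x ( (∂w/∂x) / (w (C w + 1)) ) = 0 on D. -/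
/-!
Put `q = (C₁E - 1)/(C₁E + 1)`. The implicit relation reads `θ = α t q`, and
`A = 2 / (α² t (1 - q²))`. Implicit differentiation of `θ = α t q` gives `θ_x = 1/(A - C) = w`
and `θ_t = α q (1 + C w)`. Since `C w + 1 = A w`, the flux `w_x / (w (C w + 1))` equals
`-A_x / A = -α q (1 + C w) = -θ_t`. Thus `θ` is a potential for the conservation law, and the
equation is the symmetry of the mixed partial derivatives of `θ`.
-/

open Real Filter Topology

-- For `0 < C₁` this is `tanh ((z + log C₁) / 2)`.
noncomputable def phase (C₁ z : ℝ) : ℝ := (C₁ * exp z - 1) / (C₁ * exp z + 1)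

theorem phase_sq_lt_one {C₁ : ℝ} (hC₁ : 0 < C₁) (z : ℝ) : phase C₁ z ^ 2 < 1 := by
  have hu := mul_pos hC₁ (exp_pos z)
  rw [phase, div_pow, div_lt_one (by positivity)]
  nlinarith

theorem hasDerivAt_phase {C₁ : ℝ} (hC₁ : 0 ≤ C₁) (z : ℝ) :
    HasDerivAt (phase C₁) ((1 - phase C₁ z ^ 2) / 2) z := by
  have hu : HasDerivAt (fun z => C₁ * exp z) (C₁ * exp z) z := (hasDerivAt_exp z).const_mul C₁
  have hu1 : C₁ * exp z + 1 ≠ 0 := by positivity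
  refine ((hu.sub_const 1).fun_div (hu.add_const 1) hu1).congr_deriv ?_
  rw [phase]
  field_simp
  ring

theorem div_eq_two_div_one_sub_phase_sq {C₁ : ℝ} (hC₁ : 0 < C₁) (α t z : ℝ) :
    (C₁ * exp z + 1) ^ 2 / (2 * α ^ 2 * t * C₁ * exp z) =
      2 / (α ^ 2 * t * (1 - phase C₁ z ^ 2)) := by
  have hu := mul_pos hC₁ (exp_pos z)
  have h1 : 1 - phase C₁ z ^ 2 = 4 * (C₁ * exp z) / (C₁ * exp z + 1) ^ 2 := by
    rw [phase]
    field_simp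
    ring
  rcases eq_or_ne (α ^ 2 * t) 0 with h | h
  · rw [h, zero_mul, div_zero, mul_assoc 2, h]
    simp
  · rw [h1]
    field_simp
    ring

theorem HasDerivAt.eq_of_eventuallyEq_mul_phase {α C₁ C a' b' d x : ℝ} {a b g : ℝ → ℝ}
    (hC₁ : 0 ≤ C₁) (hg : HasDerivAt g d x) (ha : HasDerivAt a a' x) (hb : HasDerivAt b b' x)
    (hfix : g =ᶠ[𝓝 x] fun s => a s * phase C₁ (α * (b s + C * g s))) :
    d = a' * phase C₁ (α * (b x + C * g x)) +
      a x * ((1 - phase C₁ (α * (b x + C * g x)) ^ 2) / 2) * (α * (b' + C * d)) := by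
  have hz : HasDerivAt (fun s => α * (b s + C * g s)) (α * (b' + C * d)) x :=
    (hb.add (hg.const_mul C)).const_mul α
  have hq : HasDerivAt (fun s => phase C₁ (α * (b s + C * g s)))
      ((1 - phase C₁ (α * (b x + C * g x)) ^ 2) / 2 * (α * (b' + C * d))) x :=
    (hasDerivAt_phase hC₁ _).comp x hz
  exact (hg.unique ((ha.mul hq).congr_of_eventuallyEq hfix)).trans (by ring)

theorem IsOpen.eventually_mk_left_mem {D : Set (ℝ × ℝ)} (hD : IsOpen D) {x t : ℝ}
    (h : (x, t) ∈ D) : ∀ᶠ s in 𝓝 x, (s, t) ∈ D :=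
  (continuous_id.prodMk continuous_const).continuousAt.eventually_mem (hD.mem_nhds h)

theorem IsOpen.eventually_mk_right_mem {D : Set (ℝ × ℝ)} (hD : IsOpen D) {x t : ℝ}
    (h : (x, t) ∈ D) : ∀ᶠ τ in 𝓝 t, (x, τ) ∈ D :=
  (continuous_const.prodMk continuous_id).continuousAt.eventually_mem (hD.mem_nhds h)

theorem deriv_add_deriv_eq_zero_of_potential {D : Set (ℝ × ℝ)} (hD : IsOpen D)
    {θ w F : ℝ × ℝ → ℝ}
    (hθx : ∀ p ∈ D, deriv (fun s => θ (s, p.2)) p.1 = w p)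
    (hθt : ∀ p ∈ D, deriv (fun τ => θ (p.1, τ)) p.2 = -F p)
    (hmix : ∀ p ∈ D, deriv (fun t => deriv (fun s => θ (s, t)) p.1) p.2 =
      deriv (fun s => deriv (fun t => θ (s, t)) p.2) p.1)
    {x t : ℝ} (hxt : (x, t) ∈ D) :
    deriv (fun τ => w (x, τ)) t + deriv (fun s => F (s, t)) x = 0 := by
  have hw : deriv (fun τ => w (x, τ)) t = deriv (fun τ => deriv (fun s => θ (s, τ)) x) t := by
    refine EventuallyEq.deriv_eq ?_
    filter_upwards [hD.eventually_mk_right_mem hxt] with τ hτ using (hθx _ hτ).symm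
  have hF : deriv (fun s => F (s, t)) x = -deriv (fun s => deriv (fun τ => θ (s, τ)) t) x := by
    rw [← deriv.neg]
    refine EventuallyEq.deriv_eq ?_
    filter_upwards [hD.eventually_mk_left_mem hxt] with s hs
    exact (neg_eq_iff_eq_neg.2 (hθt _ hs)).symm
  rw [hw, hF, hmix _ hxt, add_neg_cancel]

theorem deriv_div_mul_eq_neg_div {A w : ℝ → ℝ} {A' x : ℝ} (C : ℝ) (hw : ∀ s, w s = 1 / (A s - C))
    (hA : HasDerivAt A A' x) (hA0 : A x ≠ 0) (hAC : A x - C ≠ 0) :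
    deriv w x / (w x * (C * w x + 1)) = -(A' / A x) := by
  obtain rfl : w = fun s => 1 / (A s - C) := funext hw
  have hw' : HasDerivAt (fun s => 1 / (A s - C)) (-A' / (A x - C) ^ 2) x := by
    simpa using (hasDerivAt_const x (1 : ℝ)).fun_div (hA.sub_const C) hAC
  have hwA : 1 / (A x - C) * (C * (1 / (A x - C)) + 1) = A x / (A x - C) ^ 2 := by
    field_simp
    ring
  rw [hw'.deriv, hwA]
  field_simp

section

variable {α C₁ C : ℝ} {D : Set (ℝ × ℝ)} {θ A w : ℝ × ℝ → ℝ}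

theorem deriv_fst_eq_of_phase (hα : α ≠ 0) (hC₁ : 0 < C₁) (hD : IsOpen D)
    (hθ : ∀ p ∈ D, θ p = α * p.2 * phase C₁ (α * (p.1 + C * θ p)))
    (hA : ∀ p, A p = 2 / (α ^ 2 * p.2 * (1 - phase C₁ (α * (p.1 + C * θ p)) ^ 2)))
    (hw : ∀ p, w p = 1 / (A p - C)) {p : ℝ × ℝ} (hp : p ∈ D) (ht : p.2 ≠ 0)
    (hAC : A p - C ≠ 0) (hθx : DifferentiableAt ℝ (fun s => θ (s, p.2)) p.1) :
    deriv (fun s => θ (s, p.2)) p.1 = w p := by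
  obtain ⟨x, t⟩ := p
  simp only [hw, hA] at ht hAC hθx ⊢
  have hfix : (fun s => θ (s, t)) =ᶠ[𝓝 x] fun s => α * t * phase C₁ (α * (s + C * θ (s, t))) := by
    filter_upwards [hD.eventually_mk_left_mem hp] with s hs using hθ _ hs
  have key := hθx.hasDerivAt.eq_of_eventuallyEq_mul_phase hC₁.le
    (hasDerivAt_const x (α * t)) (hasDerivAt_id' x) hfix
  have hq := phase_sq_lt_one hC₁ (α * (x + C * θ (x, t)))
  generalize phase C₁ (α * (x + C * θ (x, t))) = q at key hq hAC ⊢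
  generalize deriv (fun s => θ (s, t)) x = d at key ⊢
  have hq' : 1 - q ^ 2 ≠ 0 := by linarith
  rw [eq_div_iff hAC]
  field_simp
  linear_combination 2 * key

theorem deriv_snd_eq_of_phase (hα : α ≠ 0) (hC₁ : 0 < C₁) (hD : IsOpen D)
    (hθ : ∀ p ∈ D, θ p = α * p.2 * phase C₁ (α * (p.1 + C * θ p)))
    (hA : ∀ p, A p = 2 / (α ^ 2 * p.2 * (1 - phase C₁ (α * (p.1 + C * θ p)) ^ 2)))
    (hw : ∀ p, w p = 1 / (A p - C)) {p : ℝ × ℝ} (hp : p ∈ D) (ht : p.2 ≠ 0)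
    (hAC : A p - C ≠ 0) (hθt : DifferentiableAt ℝ (fun τ => θ (p.1, τ)) p.2) :
    deriv (fun τ => θ (p.1, τ)) p.2 = α * phase C₁ (α * (p.1 + C * θ p)) * (1 + C * w p) := by
  obtain ⟨x, t⟩ := p
  simp only [hw, hA] at ht hAC hθt ⊢
  have hfix : (fun τ => θ (x, τ)) =ᶠ[𝓝 t] fun τ => α * τ * phase C₁ (α * (x + C * θ (x, τ))) := by
    filter_upwards [hD.eventually_mk_right_mem hp] with τ hτ using hθ _ hτ
  have key := hθt.hasDerivAt.eq_of_eventuallyEq_mul_phase hC₁.le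
    ((hasDerivAt_id' t).const_mul α) (hasDerivAt_const t x) hfix
  have hq := phase_sq_lt_one hC₁ (α * (x + C * θ (x, t)))
  generalize phase C₁ (α * (x + C * θ (x, t))) = q at key hq hAC ⊢
  generalize deriv (fun τ => θ (x, τ)) t = d at key ⊢
  have hq' : 1 - q ^ 2 ≠ 0 := by linarith
  have hK : α ^ 2 * t * (1 - q ^ 2) ≠ 0 := mul_ne_zero (mul_ne_zero (pow_ne_zero 2 hα) ht) hq'
  rw [div_sub' hK] at hAC ⊢
  rw [one_div_div]
  have hinv := inv_mul_cancel₀ (div_ne_zero_iff.1 hAC).1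
  linear_combination (2 * (2 - α ^ 2 * t * (1 - q ^ 2) * C)⁻¹) * key + (α * q - d) * hinv

theorem flux_eq_of_phase (hα : α ≠ 0) (hC₁ : 0 < C₁) (hD : IsOpen D)
    (hθ : ∀ p ∈ D, θ p = α * p.2 * phase C₁ (α * (p.1 + C * θ p)))
    (hA : ∀ p, A p = 2 / (α ^ 2 * p.2 * (1 - phase C₁ (α * (p.1 + C * θ p)) ^ 2)))
    (hw : ∀ p, w p = 1 / (A p - C)) {p : ℝ × ℝ} (hp : p ∈ D) (ht : p.2 ≠ 0)
    (hAC : A p - C ≠ 0) (hθx : DifferentiableAt ℝ (fun s => θ (s, p.2)) p.1) :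
    deriv (fun s => w (s, p.2)) p.1 / (w p * (C * w p + 1)) =
      -(α * phase C₁ (α * (p.1 + C * θ p)) * (1 + C * w p)) := by
  have hθx' : HasDerivAt (fun s => θ (s, p.2)) (w p) p.1 :=
    deriv_fst_eq_of_phase hα hC₁ hD hθ hA hw hp ht hAC hθx ▸ hθx.hasDerivAt
  obtain ⟨x, t⟩ := p
  dsimp only at ht hθx' ⊢
  have hq : HasDerivAt (fun s => phase C₁ (α * (s + C * θ (s, t))))
      ((1 - phase C₁ (α * (x + C * θ (x, t))) ^ 2) / 2 * (α * (1 + C * w (x, t)))) x :=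
    (hasDerivAt_phase hC₁.le _).comp x (((hasDerivAt_id' x).add (hθx'.const_mul C)).const_mul α)
  have hq' : 1 - phase C₁ (α * (x + C * θ (x, t))) ^ 2 ≠ 0 :=
    (sub_pos.2 (phase_sq_lt_one hC₁ _)).ne'
  have hK : α ^ 2 * t * (1 - phase C₁ (α * (x + C * θ (x, t))) ^ 2) ≠ 0 :=
    mul_ne_zero (mul_ne_zero (pow_ne_zero 2 hα) ht) hq'
  have hA0 : A (x, t) ≠ 0 := by
    rw [hA]
    exact div_ne_zero two_ne_zero hK
  have hAd : HasDerivAt (fun s => A (s, t))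
      (A (x, t) * (α * phase C₁ (α * (x + C * θ (x, t))) * (1 + C * w (x, t)))) x := by
    have h := (hasDerivAt_const x (2 : ℝ)).fun_div
      (((hq.fun_pow 2).const_sub 1).const_mul (α ^ 2 * t)) hK
    simp only [hA]
    refine h.congr_deriv ?_
    field_simp
    ring
  rw [deriv_div_mul_eq_neg_div C (fun s => hw (s, t)) hAd hA0 hAC, mul_div_cancel_left₀ _ hA0]

end

theorem implicit_solution_of_nonevolutionary_eq_general
    (α C₁ C : ℝ) (hα : 0 < α) (hC₁ : 0 < C₁)
    (D : Set (ℝ × ℝ)) (hD : IsOpen D) (hDt : ∀ p ∈ D, 0 < p.2)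
    (θ E A w : ℝ × ℝ → ℝ)
    (hE : ∀ p : ℝ × ℝ, E p = Real.exp (α * (p.1 + C * θ p)))
    (hθ : ∀ p ∈ D, θ p = α * p.2 * (C₁ * E p - 1) / (C₁ * E p + 1))
    (hA : ∀ p : ℝ × ℝ, A p = (C₁ * E p + 1) ^ 2 / (2 * α ^ 2 * p.2 * C₁ * E p))
    (hAC : ∀ p ∈ D, A p - C ≠ 0)
    (hw : ∀ p : ℝ × ℝ, w p = 1 / (A p - C))
    -- θ has first partial derivatives on D
    (hθx : ∀ p ∈ D, DifferentiableAt ℝ (fun s => θ (s, p.2)) p.1)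
    (hθt : ∀ p ∈ D, DifferentiableAt ℝ (fun t => θ (p.1, t)) p.2)
    -- mixed partial derivatives of θ and w commute on D
    (hθmix : ∀ p ∈ D,
      deriv (fun t => deriv (fun s => θ (s, t)) p.1) p.2 =
      deriv (fun s => deriv (fun t => θ (s, t)) p.2) p.1) :
    ∀ x t : ℝ, (x, t) ∈ D →
      deriv (fun t' => w (x, t')) t +
        deriv (fun s => deriv (fun s' => w (s', t)) s /
          (w (s, t) * (C * w (s, t) + 1))) x = 0 := by
  have hθ' : ∀ p ∈ D, θ p = α * p.2 * phase C₁ (α * (p.1 + C * θ p)) := fun p hp =>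
    (hθ p hp).trans (by rw [hE, phase, mul_div_assoc])
  have hA' : ∀ p, A p = 2 / (α ^ 2 * p.2 * (1 - phase C₁ (α * (p.1 + C * θ p)) ^ 2)) := fun p =>
    (hA p).trans (by rw [hE, div_eq_two_div_one_sub_phase_sq hC₁])
  intro x t hxt
  refine deriv_add_deriv_eq_zero_of_potential hD
    (F := fun p => deriv (fun s => w (s, p.2)) p.1 / (w p * (C * w p + 1)))
    (fun p hp =>
      deriv_fst_eq_of_phase hα.ne' hC₁ hD hθ' hA' hw hp (hDt p hp).ne' (hAC p hp) (hθx p hp))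
    (fun p hp => ?_) hθmix hxt
  rw [flux_eq_of_phase hα.ne' hC₁ hD hθ' hA' hw hp (hDt p hp).ne' (hAC p hp) (hθx p hp), neg_neg]
  exact deriv_snd_eq_of_phase hα.ne' hC₁ hD hθ' hA' hw hp (hDt p hp).ne' (hAC p hp) (hθt p hp)

/-- The implicitly defined function `w` with
`(Cw+1)/w = A = (C₁E+1)²/(2α²tC₁E)`, `E = exp(α(x+Cθ))`,
`θ = αt(C₁E−1)/(C₁E+1)`, solves the nonevolutionary equation
`w_t + ∂_x (w_x/(w(Cw+1))) = 0` on `D`, assuming the displayed partial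
derivatives exist and mixed partials commute. -/
theorem implicit_solution_of_nonevolutionary_eq
    (α C₁ C : ℝ) (hα : 0 < α) (hC₁ : 0 < C₁)
    (D : Set (ℝ × ℝ)) (hD : IsOpen D) (hDt : ∀ p ∈ D, 0 < p.2)
    (θ E A w : ℝ × ℝ → ℝ)
    (hE : ∀ p : ℝ × ℝ, E p = Real.exp (α * (p.1 + C * θ p)))
    (hθ : ∀ p ∈ D, θ p = α * p.2 * (C₁ * E p - 1) / (C₁ * E p + 1))
    (hA : ∀ p : ℝ × ℝ, A p = (C₁ * E p + 1) ^ 2 / (2 * α ^ 2 * p.2 * C₁ * E p))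
    (hAC : ∀ p ∈ D, A p - C ≠ 0)
    (hw : ∀ p : ℝ × ℝ, w p = 1 / (A p - C))
    (hw0 : ∀ p ∈ D, w p ≠ 0)
    (hCw : ∀ p ∈ D, C * w p + 1 ≠ 0)
    -- θ has first partial derivatives on D
    (hθx : ∀ p ∈ D, DifferentiableAt ℝ (fun s => θ (s, p.2)) p.1)
    (hθt : ∀ p ∈ D, DifferentiableAt ℝ (fun t => θ (p.1, t)) p.2)
    -- w has the partial derivatives appearing in the equation on D
    (hwx : ∀ p ∈ D, DifferentiableAt ℝ (fun s => w (s, p.2)) p.1)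
    (hwt : ∀ p ∈ D, DifferentiableAt ℝ (fun t => w (p.1, t)) p.2)
    (hwxx : ∀ p ∈ D, DifferentiableAt ℝ (fun s => deriv (fun s' => w (s', p.2)) s) p.1)
    (hflux : ∀ p ∈ D, DifferentiableAt ℝ
      (fun s => deriv (fun s' => w (s', p.2)) s /
        (w (s, p.2) * (C * w (s, p.2) + 1))) p.1)
    -- mixed partial derivatives of θ and w commute on D
    (hθmix : ∀ p ∈ D,
      deriv (fun t => deriv (fun s => θ (s, t)) p.1) p.2 =
      deriv (fun s => deriv (fun t => θ (s, t)) p.2) p.1)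
    (hwmix : ∀ p ∈ D,
      deriv (fun t => deriv (fun s => w (s, t)) p.1) p.2 =
      deriv (fun s => deriv (fun t => w (s, t)) p.2) p.1) :
    ∀ x t : ℝ, (x, t) ∈ D →
      deriv (fun t' => w (x, t')) t +
        deriv (fun s => deriv (fun s' => w (s', t)) s /
          (w (s, t) * (C * w (s, t) + 1))) x = 0 :=
  implicit_solution_of_nonevolutionary_eq_general α C₁ C hα hC₁ D hD hDt θ E A w hE hθ hA hAC hw hθx
    hθt hθmix
end
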